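/- Let R be a strongly ℤ-graded ring with grading 𝒜. For every n ≥ 0, the additive subgroup R_{≥−n} = ⨆_{m ≥ −n} 𝒜 m, regarded as a right module over the subring R_{≥0} via multiplication, is finitely generated and projective; likewise, R_{≤n} = ⨆_{m ≤ n} 𝒜 m is finitely generated projective as a right module over the subring R_{≤0}. -/

import Mathlib

/-- A ℤ-graded ring is *strongly graded* if `𝒜 i * 𝒜 j = 𝒜 (i + j)` for all `i j`. -/
def IsStronglyGraded {R : Type*} [Ring R] (𝒜 : ℤ → Submodule ℤ R) : Prop :=
  ∀ i j : ℤ, 𝒜 i * 𝒜 j = 𝒜 (i + j)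

variable {R : Type*} [Ring R] (𝒜 : ℤ → Submodule ℤ R) [GradedRing 𝒜]

/-- `R_{≤k}`, the sum of the homogeneous components of degree at most `k`. -/
def Rle (k : ℤ) : Submodule ℤ R := ⨆ n ≤ k, 𝒜 n

/-- `R_{≥k}`, the sum of the homogeneous components of degree at least `k`. -/
def Rge (k : ℤ) : Submodule ℤ R := ⨆ n ≥ k, 𝒜 n

theorem Rle_mul_Rle (a b : ℤ) : Rle 𝒜 a * Rle 𝒜 b ≤ Rle 𝒜 (a + b) := by
  rw [Rle, Rle, Submodule.iSup_mul]
  refine iSup_le fun n => ?_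
  rw [Submodule.iSup_mul]
  refine iSup_le fun hn => ?_
  rw [Submodule.mul_iSup]
  refine iSup_le fun m => ?_
  rw [Submodule.mul_iSup]
  refine iSup_le fun hm => ?_
  refine le_trans (Submodule.mul_le.2 fun x hx y hy => SetLike.mul_mem_graded hx hy) ?_
  exact le_iSup₂_of_le (n + m) (add_le_add hn hm) le_rfl

theorem Rge_mul_Rge (a b : ℤ) : Rge 𝒜 a * Rge 𝒜 b ≤ Rge 𝒜 (a + b) := by
  rw [Rge, Rge, Submodule.iSup_mul]
  refine iSup_le fun n => ?_
  rw [Submodule.iSup_mul]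
  refine iSup_le fun hn => ?_
  rw [Submodule.mul_iSup]
  refine iSup_le fun m => ?_
  rw [Submodule.mul_iSup]
  refine iSup_le fun hm => ?_
  refine le_trans (Submodule.mul_le.2 fun x hx y hy => SetLike.mul_mem_graded hx hy) ?_
  exact le_iSup₂_of_le (n + m) (add_le_add hn hm) le_rfl

/-- The subring `R_{≤0}` of `R`. -/
def RleSubring : Subring R where
  carrier := Rle 𝒜 0
  zero_mem' := zero_mem _
  add_mem' := fun h1 h2 => add_mem h1 h2
  neg_mem' := fun h => neg_mem h
  one_mem' :=
    Submodule.mem_iSup_of_mem 0 (Submodule.mem_iSup_of_mem le_rfl (SetLike.one_mem_graded 𝒜))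
  mul_mem' := fun h1 h2 => by
    simpa using Rle_mul_Rle 𝒜 0 0 (Submodule.mul_mem_mul h1 h2)

/-- The subring `R_{≥0}` of `R`. -/
def RgeSubring : Subring R where
  carrier := Rge 𝒜 0
  zero_mem' := zero_mem _
  add_mem' := fun h1 h2 => add_mem h1 h2
  neg_mem' := fun h => neg_mem h
  one_mem' :=
    Submodule.mem_iSup_of_mem 0 (Submodule.mem_iSup_of_mem le_rfl (SetLike.one_mem_graded 𝒜))
  mul_mem' := fun h1 h2 => by
    simpa using Rge_mul_Rge 𝒜 0 0 (Submodule.mul_mem_mul h1 h2)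

/-- `R_{≤k}` is a right module over `R_{≤0}` (a left module over the opposite
ring), the action being multiplication in `R`. -/
instance RleRightModule (k : ℤ) : Module ((RleSubring 𝒜)ᵐᵒᵖ) (Rle 𝒜 k) where
  smul s x := ⟨(x : R) * (s.unop : R), by
    simpa using Rle_mul_Rle 𝒜 k 0 (Submodule.mul_mem_mul x.2 s.unop.2)⟩
  one_smul x := Subtype.ext (mul_one _)
  mul_smul a b x := Subtype.ext (mul_assoc (x : R) _ _).symm
  smul_zero a := Subtype.ext (zero_mul _)
  smul_add a x y := Subtype.ext (add_mul _ _ _)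
  add_smul a b x := Subtype.ext (mul_add _ _ _)
  zero_smul x := Subtype.ext (mul_zero _)

/-- `R_{≥k}` is a right module over `R_{≥0}` (a left module over the opposite
ring), the action being multiplication in `R`. -/
instance RgeRightModule (k : ℤ) : Module ((RgeSubring 𝒜)ᵐᵒᵖ) (Rge 𝒜 k) where
  smul s x := ⟨(x : R) * (s.unop : R), by
    simpa using Rge_mul_Rge 𝒜 k 0 (Submodule.mul_mem_mul x.2 s.unop.2)⟩
  one_smul x := Subtype.ext (mul_one _)
  mul_smul a b x := Subtype.ext (mul_assoc (x : R) _ _).symm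
  smul_zero a := Subtype.ext (zero_mul _)
  smul_add a x y := Subtype.ext (add_mul _ _ _)
  add_smul a b x := Subtype.ext (mul_add _ _ _)
  zero_smul x := Subtype.ext (mul_zero _)


/-!
Strong grading gives `1 = ∑ xᵢ yᵢ` with `xᵢ ∈ 𝒜 (-n)` and `yᵢ ∈ 𝒜 n`. Then `m ↦ (yᵢ m)ᵢ` maps
`R_{≥-n}` into `R_{≥0}ᵏ`, and `(sᵢ) ↦ ∑ xᵢ sᵢ` is a left inverse of it, so `R_{≥-n}` is a direct
summand of a finite free right `R_{≥0}`-module. The same argument with `n` and `-n` exchanged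
handles `R_{≤n}`.
-/

theorem Submodule.exists_fin_sum_mul_eq_of_mem_mul {R A : Type*} [CommSemiring R] [Semiring A]
    [Algebra R A] {P Q : Submodule R A} {a : A} (ha : a ∈ P * Q) :
    ∃ (k : ℕ) (x y : Fin k → A), (∀ i, x i ∈ P) ∧ (∀ i, y i ∈ Q) ∧ ∑ i, x i * y i = a := by
  refine Submodule.mul_induction_on ha (fun p hp q hq => ⟨1, fun _ => p, fun _ => q,
    fun _ => hp, fun _ => hq, by simp⟩) ?_
  rintro _ _ ⟨k₁, x₁, y₁, hx₁, hy₁, rfl⟩ ⟨k₂, x₂, y₂, hx₂, hy₂, rfl⟩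
  refine ⟨k₁ + k₂, Fin.append x₁ x₂, Fin.append y₁ y₂, Fin.addCases (by simpa) (by simpa),
    Fin.addCases (by simpa) (by simpa), ?_⟩
  simp [Fin.sum_univ_add]

/-- The dual basis lemma, in the direction giving finiteness and projectivity. -/
theorem Module.finite_and_projective_of_sum_smul_eq {S M ι : Type*} [Semiring S]
    [AddCommMonoid M] [Module S M] [Fintype ι] (φ : ι → M →ₗ[S] S) (x : ι → M)
    (h : ∀ m, ∑ i, φ i m • x i = m) : Module.Finite S M ∧ Module.Projective S M := by
  have hsplit : Fintype.linearCombination S x ∘ₗ LinearMap.pi φ = LinearMap.id :=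
    LinearMap.ext h
  exact ⟨.of_surjective _ (LinearMap.surjective_of_comp_eq_id _ _ hsplit),
    .of_split _ _ hsplit⟩

theorem Subring.finite_and_projective_of_one_mem_mul {R : Type*} [Ring R] (S : Subring R)
    (M : Submodule ℤ R) [Module Sᵐᵒᵖ M]
    (hsmul : ∀ (s : Sᵐᵒᵖ) (m : M), ((s • m : M) : R) = m * s.unop)
    {P Q : Submodule ℤ R} (hPQ : (1 : R) ∈ P * Q) (hP : P ≤ M)
    (hQ : ∀ q ∈ Q, ∀ m ∈ M, q * m ∈ S) :
    Module.Finite Sᵐᵒᵖ M ∧ Module.Projective Sᵐᵒᵖ M := by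
  obtain ⟨k, x, y, hx, hy, hxy⟩ := Submodule.exists_fin_sum_mul_eq_of_mem_mul hPQ
  let φ (i : Fin k) : M →ₗ[Sᵐᵒᵖ] Sᵐᵒᵖ :=
    { toFun m := .op ⟨y i * m, hQ _ (hy i) _ m.2⟩
      map_add' m m' := MulOpposite.unop_injective <| Subtype.ext <| by simp [mul_add]
      map_smul' s m := MulOpposite.unop_injective <| Subtype.ext <| by simp [hsmul, mul_assoc] }
  refine Module.finite_and_projective_of_sum_smul_eq φ (fun i => ⟨x i, hP (hx i)⟩) fun m => ?_
  ext
  simp [φ, hsmul, ← mul_assoc, ← Finset.sum_mul, hxy]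

theorem one_mem_mul_neg (h : IsStronglyGraded 𝒜) (i : ℤ) : (1 : R) ∈ 𝒜 i * 𝒜 (-i) := by
  rw [h, add_neg_cancel]
  exact SetLike.one_mem_graded 𝒜

theorem Rge_Rle_finite_projective (h : IsStronglyGraded 𝒜) (n : ℤ) :
    (Module.Finite ((RgeSubring 𝒜)ᵐᵒᵖ) (Rge 𝒜 (-n)) ∧
      Module.Projective ((RgeSubring 𝒜)ᵐᵒᵖ) (Rge 𝒜 (-n))) ∧
    (Module.Finite ((RleSubring 𝒜)ᵐᵒᵖ) (Rle 𝒜 n) ∧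
      Module.Projective ((RleSubring 𝒜)ᵐᵒᵖ) (Rle 𝒜 n)) := by
  have hAn_le_Rge : 𝒜 n ≤ Rge 𝒜 n := le_iSup₂_of_le n le_rfl le_rfl
  have hAneg_le_Rge : 𝒜 (-n) ≤ Rge 𝒜 (-n) := le_iSup₂_of_le (-n) le_rfl le_rfl
  have hAn_le_Rle : 𝒜 n ≤ Rle 𝒜 n := le_iSup₂_of_le n le_rfl le_rfl
  have hAneg_le_Rle : 𝒜 (-n) ≤ Rle 𝒜 (-n) := le_iSup₂_of_le (-n) le_rfl le_rfl
  constructor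
  · refine (RgeSubring 𝒜).finite_and_projective_of_one_mem_mul _ (fun _ _ => rfl)
      (by simpa using one_mem_mul_neg 𝒜 h (-n)) hAneg_le_Rge fun q hq m hm => ?_
    show q * m ∈ Rge 𝒜 0
    simpa using Rge_mul_Rge 𝒜 n (-n) (Submodule.mul_mem_mul (hAn_le_Rge hq) hm)
  · refine (RleSubring 𝒜).finite_and_projective_of_one_mem_mul _ (fun _ _ => rfl)
      (one_mem_mul_neg 𝒜 h n) hAn_le_Rle fun q hq m hm => ?_
    show q * m ∈ Rle 𝒜 0
    simpa using Rle_mul_Rle 𝒜 (-n) n (Submodule.mul_mem_mul (hAneg_le_Rle hq) hm)
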